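/- arXiv:1602.08744 — 2 statements merged into one kernel-verified Lean document; each statement's English description precedes it below -/
import Mathlib

section
/- Let P be a nondegenerate-homogeneous polynomial on a d-dimensional real vector space W. Then there exist a basis w₁,…,w_d of W and positive integers n₁,…,n_d such that, writing ξ = ξ₁w₁ + … + ξ_d w_d, P(ξ) = Σ_{β : Σⱼ βⱼ/nⱼ = 1} a_β ξ^β for some complex coefficients a_β, where the sum ranges over multi-indices β ∈ ℕ^d with Σⱼ βⱼ/nⱼ = 1. -/
/-!
Put `q(η) = P(Bη)`. Since `exp (log t • E) = B · diag(t ^ Dᵢ) · B⁻¹`, homogeneity reads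
`q(t ^ D₁ η₁, …, t ^ D_d η_d) = t · q(η)`, and comparing coefficients shows that every monomial
`η ^ β` of `q` has weight `∑ βᵢ Dᵢ = 1`. Nondegeneracy gives `q(eᵢ) ≠ 0`, so `q` contains a pure
power `ηᵢ ^ m`; its weight `m Dᵢ = 1` forces `Dᵢ = 1 / nᵢ` with `nᵢ = m` a positive integer. The
basis is formed by the columns of `B`.
-/

open MvPolynomial Matrix

theorem MvPolynomial.eq_of_eval_ofReal_eq {σ : Type*} {p q : MvPolynomial σ ℂ}
    (h : ∀ ξ : σ → ℝ, eval (fun i => (ξ i : ℂ)) p = eval (fun i => (ξ i : ℂ)) q) : p = q :=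
  funext_set (fun _ => Set.range Complex.ofReal)
    (fun _ => Set.infinite_range_of_injective Complex.ofReal_injective) fun x hx => by
      choose ξ hξ using hx
      simpa only [hξ] using h fun i => ξ i (Set.mem_univ i)

theorem MvPolynomial.eval_bind₁_mulVec {R σ : Type*} [CommSemiring R] [Fintype σ]
    (A : Matrix σ σ R) (p : MvPolynomial σ R) (x : σ → R) :
    eval x (bind₁ (fun i => ∑ j, C (A i j) * X j) p) = eval (A *ᵥ x) p := by
  change eval₂Hom (RingHom.id R) x _ = _
  rw [eval₂Hom_bind₁]
  refine eval₂Hom_congr rfl ?_ rfl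
  ext i
  simp [mulVec, dotProduct]

theorem Real.prod_rpow_mul_pow {σ : Type*} [Fintype σ] {t : ℝ} (ht : 0 < t) (D ξ : σ → ℝ)
    (γ : σ →₀ ℕ) :
    ∏ i, (t ^ D i * ξ i) ^ γ i = t ^ Finsupp.weight D γ * ∏ i, ξ i ^ γ i := by
  rw [Finsupp.weight_eq_sum, Real.rpow_sum_of_pos ht, ← Finset.prod_mul_distrib]
  refine Finset.prod_congr rfl fun i _ => ?_
  rw [mul_pow, nsmul_eq_mul, mul_comm (γ i : ℝ), Real.rpow_mul_natCast ht.le]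

theorem MvPolynomial.coeff_mul_rpow_weight_of_eval_rpow_mul {σ : Type*} [Fintype σ]
    {q : MvPolynomial σ ℂ} {D : σ → ℝ} {t : ℝ} (ht : 0 < t)
    (h : ∀ ξ : σ → ℝ, eval (fun i => ((t ^ D i * ξ i : ℝ) : ℂ)) q
      = t * eval (fun i => (ξ i : ℂ)) q) (β : σ →₀ ℕ) :
    ((t ^ Finsupp.weight D β : ℝ) : ℂ) * coeff β q = t * coeff β q := by
  classical
  -- `r` is the polynomial `η ↦ q(t ^ D₁ η₁, …)`, so `h` says `r = t • q`
  set r := ∑ γ ∈ q.support, monomial γ (((t ^ Finsupp.weight D γ : ℝ) : ℂ) * coeff γ q)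
  have hr : r = C (t : ℂ) * q := eq_of_eval_ofReal_eq fun ξ => by
    rw [map_mul, eval_C, ← h, eval_eq' _ q, map_sum]
    refine Finset.sum_congr rfl fun γ _ => ?_
    rw [eval_monomial, Finsupp.prod_pow]
    simp only [← Complex.ofReal_pow, ← Complex.ofReal_prod, Real.prod_rpow_mul_pow ht]
    push_cast
    ring
  have := congrArg (coeff β) hr
  rwa [coeff_C_mul, coeff_sum, Finset.sum_eq_single β (fun γ _ hγ => by simp [coeff_monomial, hγ])
    (fun hβ => by simp [notMem_support_iff.mp hβ]), coeff_monomial, if_pos rfl] at this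

theorem MvPolynomial.isWeightedHomogeneous_of_eval_rpow_mul {σ : Type*} [Fintype σ]
    {q : MvPolynomial σ ℂ} {D : σ → ℝ}
    (h : ∀ t : ℝ, 0 < t → ∀ ξ : σ → ℝ, eval (fun i => ((t ^ D i * ξ i : ℝ) : ℂ)) q
      = t * eval (fun i => (ξ i : ℂ)) q) :
    q.IsWeightedHomogeneous D 1 := by
  intro β hβ
  have he := coeff_mul_rpow_weight_of_eval_rpow_mul (Real.exp_pos 1) (h _ (Real.exp_pos 1)) β
  rw [Real.exp_one_rpow, mul_left_inj' hβ, Complex.ofReal_inj, Real.exp_eq_exp] at he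
  exact he

theorem MvPolynomial.IsWeightedHomogeneous.exists_nsmul_eq {R M σ : Type*} [CommSemiring R]
    [AddCommMonoid M] [Fintype σ] {q : MvPolynomial σ R} {D : σ → M} {w : M}
    (hq : q.IsWeightedHomogeneous D w) (hw : w ≠ 0) {x : σ → R} {i : σ}
    (hx : ∀ j, j ≠ i → x j = 0) (hqx : eval x q ≠ 0) :
    ∃ m : ℕ, 0 < m ∧ m • D i = w := by
  rw [eval_eq'] at hqx
  obtain ⟨β, -, hβ⟩ := Finset.exists_ne_zero_of_sum_ne_zero hqx
  have hβi : β = Finsupp.single i (β i) := by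
    ext j
    by_cases hj : j = i
    · simp [hj]
    · by_contra hne
      refine hβ (mul_eq_zero_of_right _ (Finset.prod_eq_zero (Finset.mem_univ j) ?_))
      rw [hx j hj, zero_pow (by simpa [hj] using hne)]
  have hwβ := hq (left_ne_zero_of_mul hβ)
  rw [hβi, Finsupp.weight_single] at hwβ
  refine ⟨β i, Nat.pos_of_ne_zero fun h0 => hw ?_, hwβ⟩
  rw [← hwβ, h0, zero_smul]

theorem Finsupp.sum_div_eq_one_of_weight_eq_one {σ : Type*} [Fintype σ] {D : σ → ℝ}
    {n : σ → ℕ} (hn : ∀ i, n i • D i = 1) {β : σ →₀ ℕ} (hβ : weight D β = 1) :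
    ∑ j, (β j : ℚ) / n j = 1 := by
  have hD : ∀ j, D j = (n j : ℝ)⁻¹ := fun j =>
    eq_inv_of_mul_eq_one_right (by simpa only [nsmul_eq_mul] using hn j)
  rw [weight_eq_sum] at hβ
  have : ((∑ j, (β j : ℚ) / n j : ℚ) : ℝ) = 1 := by
    push_cast
    simpa only [nsmul_eq_mul, hD, div_eq_mul_inv] using hβ
  exact_mod_cast this

theorem Matrix.exp_log_smul_conj_diagonal {m : Type*} [Fintype m] [DecidableEq m]
    (B : Matrix m m ℝ) (hB : IsUnit B) (D : m → ℝ) {t : ℝ} (ht : 0 < t) :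
    NormedSpace.exp (Real.log t • (B * diagonal D * B⁻¹)) =
      B * diagonal (fun i => t ^ D i) * B⁻¹ := by
  rw [← smul_mul_assoc, ← mul_smul_comm, ← diagonal_smul, exp_conj B _ hB, exp_diagonal]
  congr 3
  ext i
  simp [← Real.exp_eq_exp_ℝ, Real.rpow_def_of_pos ht, mul_comm]

theorem Matrix.exp_log_smul_conj_diagonal_mulVec {m : Type*} [Fintype m] [DecidableEq m]
    (B : Matrix m m ℝ) (hB : IsUnit B) (D : m → ℝ) {t : ℝ} (ht : 0 < t) (ξ : m → ℝ) :
    NormedSpace.exp (Real.log t • (B * diagonal D * B⁻¹)) *ᵥ (B *ᵥ ξ) =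
      B *ᵥ fun i => t ^ D i * ξ i := by
  rw [exp_log_smul_conj_diagonal B hB D ht, mulVec_mulVec, Matrix.mul_assoc,
    nonsing_inv_mul B ((isUnit_iff_isUnit_det B).mp hB), Matrix.mul_one, ← mulVec_mulVec]
  congr 1
  funext i
  rw [mulVec_diagonal]

theorem Matrix.exists_basis_sum_smul_eq_mulVec {n R : Type*} [Fintype n] [DecidableEq n]
    [CommRing R] (B : Matrix n n R) (hB : IsUnit B) :
    ∃ w : Module.Basis n R (n → R), ∀ ξ : n → R, ∑ i, ξ i • w i = B *ᵥ ξ := by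
  let e := B.toLinearEquiv' hB.invertible
  refine ⟨(Pi.basisFun R n).map e, fun ξ => ?_⟩
  have he : e ξ = B *ᵥ ξ := by rw [← toLin'_apply, ← toLinearEquiv'_apply]; rfl
  conv_rhs => rw [← he, ← (Pi.basisFun R n).sum_repr ξ]
  simp only [Module.Basis.map_apply, map_sum, map_smul, Pi.basisFun_repr]

/-- Representation of a nondegenerate-homogeneous polynomial: there exist a basis and
positive integer weights n such that P is a sum of monomials ξ^β with |β : n| = 1. -/
theorem nondegenerate_homogeneous_representation {d : ℕ}
    (p : MvPolynomial (Fin d) ℂ) (P : (Fin d → ℝ) → ℂ)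
    (hP : ∀ ξ : Fin d → ℝ, P ξ = MvPolynomial.eval (fun i => (ξ i : ℂ)) p)
    (hnondeg : ∀ ξ : Fin d → ℝ, ξ ≠ 0 → P ξ ≠ 0)
    (E B : Matrix (Fin d) (Fin d) ℝ) (D : Fin d → ℝ)
    (hB : IsUnit B) (hdiag : E = B * Matrix.diagonal D * B⁻¹)
    (hhom : ∀ t : ℝ, 0 < t → ∀ ξ : Fin d → ℝ,
      P ((NormedSpace.exp ((Real.log t) • E)).mulVec ξ) = (t : ℂ) * P ξ) :
    ∃ (w : Module.Basis (Fin d) ℝ (Fin d → ℝ)) (n : Fin d → ℕ)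
      (S : Finset (Fin d → ℕ)) (a : (Fin d → ℕ) → ℂ),
      (∀ i, 0 < n i) ∧
      (∀ β ∈ S, (∑ j, (β j : ℚ) / (n j : ℚ)) = 1) ∧
      (∀ ξ : Fin d → ℝ,
        P (∑ i, ξ i • w i) = ∑ β ∈ S, a β * ∏ j, (ξ j : ℂ) ^ (β j)) := by
  set q := bind₁ (fun i => ∑ j, C (B.map Complex.ofReal i j) * X j) p
  have hq (ξ : Fin d → ℝ) : eval (fun i => (ξ i : ℂ)) q = P (B *ᵥ ξ) := by
    rw [eval_bind₁_mulVec, hP]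
    congr 2
    funext i
    exact (RingHom.map_mulVec Complex.ofRealHom B ξ i).symm
  have hq_hom : q.IsWeightedHomogeneous D 1 := isWeightedHomogeneous_of_eval_rpow_mul
    fun t ht ξ => by
      rw [hq, hq, ← hhom t ht, hdiag, exp_log_smul_conj_diagonal_mulVec B hB D ht]
  have hn (i : Fin d) : ∃ m : ℕ, 0 < m ∧ m • D i = 1 := by
    refine hq_hom.exists_nsmul_eq one_ne_zero (x := fun j => ((Pi.single i 1 : Fin d → ℝ) j : ℂ))
      (fun j hj => by simp [hj]) ?_
    rw [hq]
    have hsingle : (Pi.single i 1 : Fin d → ℝ) ≠ 0 := Pi.single_ne_zero_iff.mpr one_ne_zero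
    exact hnondeg _ fun h0 =>
      hsingle (mulVec_injective_iff_isUnit.mpr hB (h0.trans (mulVec_zero B).symm))
  choose n hn_pos hnD using hn
  obtain ⟨w, hw⟩ := B.exists_basis_sum_smul_eq_mulVec hB
  refine ⟨w, n, q.support.map Finsupp.equivFunOnFinite.toEmbedding,
    fun β => coeff (Finsupp.equivFunOnFinite.symm β) q, hn_pos, ?_, fun ξ => ?_⟩
  · intro β hβ
    obtain ⟨γ, hγ, rfl⟩ := Finset.mem_map.mp hβ
    exact Finsupp.sum_div_eq_one_of_weight_eq_one hnD (hq_hom (mem_support_iff.mp hγ))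
  · rw [hw, ← hq, eval_eq', Finset.sum_map]
    simp only [Equiv.coe_toEmbedding, Equiv.symm_apply_apply, Finsupp.equivFunOnFinite_apply]
end

section
/- Let P : ℝ^d → ℂ be a polynomial with R = Re P positive-definite (R(ξ) ≥ 0 with equality only at 0) and suppose R(t^E ξ) = t·R(ξ) for all t > 0, ξ, for some diagonalizable E with positive spectrum, all eigenvalues strictly less than 1. Define the Legendre–Fenchel transform R^#(x) = sup_ξ {⟨ξ, x⟩ − R(ξ)}. Then R^# is finite-valued, continuous, R^#(x) ≥ 0 with R^#(x) = 0 only when x = 0, and R^#((t^{I−E})^* x) = t·R^#(x) for all t > 0, i.e., I − E^* ∈ Exp(R^#). -/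
/-!
`R^#` is a supremum of affine functions of `x`, hence convex, and therefore continuous once it is
finite. Everything else comes from comparing `R` with the norm along the orbits of `s ↦ e^{sE}`:
every `ξ ≠ 0` is `e^{sE} η` with `‖η‖ = 1` (intermediate value theorem), so `R ξ = e^s R η` is of
exact order `e^s`, while `‖ξ‖` is at most of order `e^{sΛ}` for large `s` and at least of order
`e^{sΛ}` for very negative `s`, where `Λ < 1` bounds the spectrum of `E`. Hence `R` is superlinear
at infinity, which makes the supremum finite, and `R = o(‖ξ‖)` at `0`, which rules out
`R^# x = 0` for `x ≠ 0` by testing with `ξ = τ x`, `τ → 0⁺`. The scaling law is the substitution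
`ξ ↦ t^{-E} ξ` in the supremum, since `t^{I-E} = t • t^{-E}`.
-/

open Matrix Filter Topology Asymptotics Set Metric

variable {ι : Type*} [Fintype ι]

noncomputable def legendreFenchel (R : (ι → ℝ) → ℝ) (x : ι → ℝ) : ℝ :=
  ⨆ ξ, ξ ⬝ᵥ x - R ξ

section LegendreFenchel

variable {R : (ι → ℝ) → ℝ}

theorem bddAbove_range_dotProduct_sub (hR : Continuous R) (hR0 : R 0 = 0)
    (hnonneg : ∀ ξ, 0 ≤ R ξ) (hlarge : (fun ξ => ‖ξ‖) =o[cocompact (ι → ℝ)] R) (x : ι → ℝ) :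
    BddAbove (range fun ξ => ξ ⬝ᵥ x - R ξ) := by
  have hlin : (fun ξ : ι → ℝ => ξ ⬝ᵥ x) =o[cocompact _] R :=
    (isBigO_norm_right.2 ((LinearMap.toContinuousLinearMap
      ((dotProductBilin ℝ ℝ).flip x)).isBigO_id _)).trans_isLittleO hlarge
  have hle : ∀ᶠ ξ in cocompact _, ξ ⬝ᵥ x - R ξ ≤ (0 : ι → ℝ) ⬝ᵥ x - R 0 := by
    filter_upwards [hlin.bound one_pos] with ξ hξ
    rw [one_mul, Real.norm_of_nonneg (hnonneg ξ)] at hξ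
    simp only [zero_dotProduct, hR0, sub_zero]
    linarith [Real.le_norm_self (ξ ⬝ᵥ x)]
  obtain ⟨ξ₀, hξ₀⟩ := (by fun_prop : Continuous fun ξ => ξ ⬝ᵥ x - R ξ).exists_forall_ge' 0 hle
  exact ⟨_, forall_mem_range.2 hξ₀⟩

theorem le_legendreFenchel {x : ι → ℝ} (h : BddAbove (range fun ξ => ξ ⬝ᵥ x - R ξ))
    (ξ : ι → ℝ) : ξ ⬝ᵥ x - R ξ ≤ legendreFenchel R x :=
  le_ciSup h ξ

theorem isLUB_legendreFenchel {x : ι → ℝ} (h : BddAbove (range fun ξ => ξ ⬝ᵥ x - R ξ)) :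
    IsLUB {y | ∃ ξ, y = ξ ⬝ᵥ x - R ξ} (legendreFenchel R x) := by
  have hset : {y | ∃ ξ, y = ξ ⬝ᵥ x - R ξ} = range fun ξ => ξ ⬝ᵥ x - R ξ := by
    ext; simp [eq_comm]
  rw [hset]
  exact isLUB_ciSup h

theorem legendreFenchel_nonneg (hR0 : R 0 = 0) {x : ι → ℝ}
    (h : BddAbove (range fun ξ => ξ ⬝ᵥ x - R ξ)) : 0 ≤ legendreFenchel R x := by
  simpa [hR0] using le_legendreFenchel h 0

theorem legendreFenchel_zero (hR0 : R 0 = 0) (hnonneg : ∀ ξ, 0 ≤ R ξ) :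
    legendreFenchel R 0 = 0 := by
  have hle : ∀ ξ : ι → ℝ, ξ ⬝ᵥ 0 - R ξ ≤ 0 := fun ξ => by simp [hnonneg ξ]
  exact le_antisymm (ciSup_le hle) (legendreFenchel_nonneg hR0 ⟨0, forall_mem_range.2 hle⟩)

theorem convexOn_legendreFenchel (h : ∀ x, BddAbove (range fun ξ => ξ ⬝ᵥ x - R ξ)) :
    ConvexOn ℝ univ (legendreFenchel R) := by
  refine ⟨convex_univ, fun x _ y _ a b ha hb hab => ciSup_le fun ξ => ?_⟩
  calc ξ ⬝ᵥ (a • x + b • y) - R ξ = a * (ξ ⬝ᵥ x - R ξ) + b * (ξ ⬝ᵥ y - R ξ) := by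
        rw [dotProduct_add, dotProduct_smul, dotProduct_smul, smul_eq_mul, smul_eq_mul]
        linear_combination (R ξ) * hab
    _ ≤ a * legendreFenchel R x + b * legendreFenchel R y := by
        gcongr <;> exact le_legendreFenchel (h _) ξ

theorem continuous_legendreFenchel (h : ∀ x, BddAbove (range fun ξ => ξ ⬝ᵥ x - R ξ)) :
    Continuous (legendreFenchel R) :=
  continuousOn_univ.1 ((convexOn_legendreFenchel h).continuousOn isOpen_univ)

theorem legendreFenchel_smul_transpose_mulVec [DecidableEq ι] {M N : Matrix ι ι ℝ} {t : ℝ}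
    (ht : 0 ≤ t) (hMN : M * N = 1) (hM : ∀ ξ, R (M *ᵥ ξ) = t * R ξ) (x : ι → ℝ) :
    legendreFenchel R ((t • N)ᵀ *ᵥ x) = t * legendreFenchel R x := by
  have hN : Function.Surjective (N *ᵥ ·) := fun η =>
    ⟨M *ᵥ η, by dsimp only; rw [mulVec_mulVec, mul_eq_one_comm.1 hMN, one_mulVec]⟩
  have hsubst : ∀ ξ, ξ ⬝ᵥ ((t • N)ᵀ *ᵥ x) - R ξ = t * ((N *ᵥ ξ) ⬝ᵥ x - R (N *ᵥ ξ)) := by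
    intro ξ
    have hR : R ξ = t * R (N *ᵥ ξ) := by rw [← hM, mulVec_mulVec, hMN, one_mulVec]
    rw [hR, dotProduct_mulVec, vecMul_transpose,
      smul_mulVec, smul_dotProduct, smul_eq_mul, mul_sub]
  simp only [legendreFenchel, hsubst, ← Real.mul_iSup_of_nonneg ht]
  rw [hN.iSup_comp fun η => η ⬝ᵥ x - R η]

theorem eq_zero_of_forall_dotProduct_le (hR : R =o[𝓝 0] fun ξ => ‖ξ‖) {x : ι → ℝ}
    (hx : ∀ ξ, ξ ⬝ᵥ x ≤ R ξ) : x = 0 := by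
  by_contra hx0
  have hxx : 0 < x ⬝ᵥ x :=
    (Fintype.sum_nonneg fun i => mul_self_nonneg (x i)).lt_of_ne'
      (mt dotProduct_self_eq_zero.1 hx0)
  have hsmall : (fun τ : ℝ => R (τ • x)) =o[𝓝 0] fun τ => τ := by
    have hτ : Tendsto (fun τ : ℝ => τ • x) (𝓝 0) (𝓝 0) := by
      simpa using (tendsto_id (x := 𝓝 (0 : ℝ))).smul_const x
    refine (hR.comp_tendsto hτ).trans_isBigO (IsBigO.of_bound ‖x‖ (Eventually.of_forall ?_))
    simp [norm_smul, mul_comm]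
  have hlarge : (fun τ : ℝ => τ) =O[𝓝[>] 0] fun τ => R (τ • x) := by
    refine IsBigO.of_bound (x ⬝ᵥ x)⁻¹ ?_
    filter_upwards [self_mem_nhdsWithin] with τ (hτ : 0 < τ)
    have h := hx (τ • x)
    rw [smul_dotProduct, smul_eq_mul] at h
    rw [Real.norm_of_nonneg hτ.le, le_inv_mul_iff₀ hxx, mul_comm]
    exact h.trans (Real.le_norm_self _)
  exact isLittleO_irrefl
    (eventually_nhdsWithin_of_forall (s := Ioi (0 : ℝ)) fun τ hτ => ne_of_gt hτ).frequently
    (hlarge.trans_isLittleO (hsmall.mono nhdsWithin_le_nhds))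

theorem legendreFenchel_eq_zero_iff (hR0 : R 0 = 0) (hnonneg : ∀ ξ, 0 ≤ R ξ)
    (h : ∀ x, BddAbove (range fun ξ => ξ ⬝ᵥ x - R ξ)) (hsmall : R =o[𝓝 0] fun ξ => ‖ξ‖)
    {x : ι → ℝ} : legendreFenchel R x = 0 ↔ x = 0 := by
  refine ⟨fun hx => eq_zero_of_forall_dotProduct_le hsmall fun ξ => ?_,
    fun hx => hx ▸ legendreFenchel_zero hR0 hnonneg⟩
  linarith [le_legendreFenchel (h x) ξ]

end LegendreFenchel

theorem exists_mem_Icc_of_mem_Ioo {D : ι → ℝ} (hD : ∀ i, D i ∈ Ioo 0 1) :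
    ∃ lam Lam, (0 < lam ∧ 0 < Lam ∧ Lam < 1) ∧ ∀ i, D i ∈ Icc lam Lam := by
  obtain ⟨lam, hlam0, hlam⟩ := (finite_singleton (0 : ℝ)).exists_between' (finite_range D)
    (by simpa using fun i => (hD i).1)
  obtain ⟨Lam, hLam, hLam1⟩ := ((finite_range D).insert 0).exists_between' (finite_singleton 1)
    (by simpa using fun i => (hD i).2)
  exact ⟨lam, Lam, ⟨hlam0 0 rfl, hLam 0 (mem_insert _ _), hLam1 1 rfl⟩,
    fun i => ⟨(hlam _ (mem_range_self i)).le, (hLam _ (mem_insert_of_mem _ (mem_range_self i))).le⟩⟩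

section Flow

variable [DecidableEq ι]

/-- `Φ s` stands for `t^E` with `t = e^s`; `lam` and `Lam` bound the spectrum of `E`. -/
structure IsSubunitFlow (Φ : ℝ → Matrix ι ι ℝ) (lam Lam : ℝ) : Prop where
  map_add : ∀ s u, Φ (s + u) = Φ s * Φ u
  map_zero : Φ 0 = 1
  continuous : Continuous Φ
  rates : 0 < lam ∧ 0 < Lam ∧ Lam < 1
  growth : ∃ c > 0, ∀ s ≥ 0, ∀ v, ‖Φ s *ᵥ v‖ ≤ c * Real.exp (s * Lam) * ‖v‖
  decay : ∃ c > 0, ∀ s ≤ 0, ∀ v, ‖Φ s *ᵥ v‖ ≤ c * Real.exp (s * lam) * ‖v‖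

namespace IsSubunitFlow

variable {Φ : ℝ → Matrix ι ι ℝ} {lam Lam : ℝ} {R : (ι → ℝ) → ℝ}

theorem mul_neg (hΦ : IsSubunitFlow Φ lam Lam) (s : ℝ) : Φ s * Φ (-s) = 1 := by
  rw [← hΦ.map_add, add_neg_cancel, hΦ.map_zero]

theorem mulVec_neg_mulVec (hΦ : IsSubunitFlow Φ lam Lam) (s : ℝ) (v : ι → ℝ) :
    Φ (-s) *ᵥ (Φ s *ᵥ v) = v := by
  rw [mulVec_mulVec, ← hΦ.map_add, neg_add_cancel, hΦ.map_zero, one_mulVec]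

theorem exists_norm_mulVec_le_of_le (hΦ : IsSubunitFlow Φ lam Lam) (s₀ : ℝ) :
    ∃ C > 0, ∀ s ≤ s₀, ∀ v, ‖Φ s *ᵥ v‖ ≤ C * ‖v‖ := by
  obtain ⟨hlam, hLam, -⟩ := hΦ.rates
  obtain ⟨c, hc, hgrowth⟩ := hΦ.growth
  obtain ⟨c', hc', hdecay⟩ := hΦ.decay
  refine ⟨c * Real.exp (max s₀ 0 * Lam) + c', by positivity, fun s hs v => ?_⟩
  rcases le_total 0 s with h0 | h0
  · calc ‖Φ s *ᵥ v‖ ≤ c * Real.exp (s * Lam) * ‖v‖ := hgrowth s h0 v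
      _ ≤ c * Real.exp (max s₀ 0 * Lam) * ‖v‖ := by
        gcongr
        exact le_max_of_le_left hs
      _ ≤ (c * Real.exp (max s₀ 0 * Lam) + c') * ‖v‖ := by gcongr; linarith
  · calc ‖Φ s *ᵥ v‖ ≤ c' * Real.exp (s * lam) * ‖v‖ := hdecay s h0 v
      _ ≤ c' * Real.exp 0 * ‖v‖ := by gcongr; nlinarith
      _ ≤ (c * Real.exp (max s₀ 0 * Lam) + c') * ‖v‖ := by
        rw [Real.exp_zero, mul_one]; gcongr; exact le_add_of_nonneg_left (by positivity)

theorem exists_norm_eq_one_mulVec_eq (hΦ : IsSubunitFlow Φ lam Lam) {ξ : ι → ℝ}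
    (hξ : ξ ≠ 0) : ∃ s η, ‖η‖ = 1 ∧ Φ s *ᵥ η = ξ := by
  obtain ⟨hlam, -⟩ := hΦ.rates
  obtain ⟨c, hc, hdecay⟩ := hΦ.decay
  have hξ' : 0 < ‖ξ‖ := norm_pos_iff.2 hξ
  have hlow : ∃ a, ‖Φ a *ᵥ ξ‖ ≤ 1 := by
    have hlim : Tendsto (fun a => c * Real.exp (a * lam) * ‖ξ‖) atBot (𝓝 0) := by
      simpa using ((Real.tendsto_exp_atBot.comp
        (tendsto_id.atBot_mul_const hlam)).const_mul c).mul_const ‖ξ‖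
    obtain ⟨a, ha, ha0⟩ := ((hlim.eventually (gt_mem_nhds one_pos)).and
      (eventually_le_atBot 0)).exists
    exact ⟨a, (hdecay a ha0 ξ).trans ha.le⟩
  have hhigh : ∃ b, 1 ≤ ‖Φ b *ᵥ ξ‖ := by
    obtain ⟨b, hb, hb0⟩ := (((Real.tendsto_exp_atTop.comp
      (tendsto_id.atTop_mul_const hlam)).eventually_ge_atTop (c / ‖ξ‖)).and
      (eventually_ge_atTop 0)).exists
    refine ⟨b, ?_⟩
    have h := hdecay (-b) (neg_nonpos.2 hb0) (Φ b *ᵥ ξ)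
    rw [hΦ.mulVec_neg_mulVec] at h
    have h1 : c ≤ Real.exp (b * lam) * ‖ξ‖ := by
      simp only [Function.comp_apply, id] at hb
      rwa [div_le_iff₀ hξ'] at hb
    have h2 : Real.exp (b * lam) * ‖ξ‖ ≤ c * ‖Φ b *ᵥ ξ‖ := by
      calc _ ≤ Real.exp (b * lam) * (c * Real.exp (-b * lam) * ‖Φ b *ᵥ ξ‖) := by gcongr
        _ = c * ‖Φ b *ᵥ ξ‖ := by rw [neg_mul, Real.exp_neg]; field_simp
    exact le_of_mul_le_mul_left (by linarith) hc
  obtain ⟨u, hu⟩ := mem_range_of_exists_le_of_exists_ge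
    (hΦ.continuous.matrix_mulVec continuous_const).norm hlow hhigh
  exact ⟨-u, Φ u *ᵥ ξ, hu, hΦ.mulVec_neg_mulVec u ξ⟩

theorem norm_isLittleO_cocompact (hΦ : IsSubunitFlow Φ lam Lam) (hR : Continuous R)
    (hpos : ∀ ξ, ξ ≠ 0 → 0 < R ξ) (hhom : ∀ s ξ, R (Φ s *ᵥ ξ) = Real.exp s * R ξ) :
    (fun ξ => ‖ξ‖) =o[cocompact (ι → ℝ)] R := by
  rw [isLittleO_iff]
  intro ε hε
  obtain ⟨-, -, hLam⟩ := hΦ.rates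
  obtain ⟨c, hc, hgrowth⟩ := hΦ.growth
  obtain ⟨m, hm, hmR⟩ : ∃ m > 0, ∀ η ∈ sphere (0 : ι → ℝ) 1, m ≤ R η :=
    (isCompact_sphere 0 1).exists_forall_le' hR.continuousOn
      fun η hη => hpos η (ne_zero_of_mem_unit_sphere ⟨η, hη⟩)
  obtain ⟨s₀, hs₀⟩ : ∃ s₀, ∀ s ≥ s₀, c ≤ ε * m * Real.exp (s * (1 - Lam)) ∧ 0 ≤ s := by
    have hlim : Tendsto (fun s => ε * m * Real.exp (s * (1 - Lam))) atTop atTop :=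
      (Real.tendsto_exp_atTop.comp (tendsto_id.atTop_mul_const (sub_pos.2 hLam))).const_mul_atTop
        (by positivity)
    exact eventually_atTop.1 ((hlim.eventually_ge_atTop c).and (eventually_ge_atTop 0))
  obtain ⟨C, hC0, hC⟩ := hΦ.exists_norm_mulVec_le_of_le s₀
  refine mem_cocompact.2 ⟨closedBall 0 C, isCompact_closedBall 0 C, fun ξ hξ => ?_⟩
  replace hξ : C < ‖ξ‖ := by simpa using hξ
  show ‖‖ξ‖‖ ≤ ε * ‖R ξ‖
  obtain ⟨s, η, hη, rfl⟩ := hΦ.exists_norm_eq_one_mulVec_eq (norm_pos_iff.1 (hC0.trans hξ))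
  have hs : s₀ ≤ s := by
    by_contra! hs
    have := hC s hs.le η
    rw [hη, mul_one] at this
    linarith
  obtain ⟨hcs, hs0⟩ := hs₀ s hs
  rw [norm_norm, hhom]
  calc ‖Φ s *ᵥ η‖ ≤ c * Real.exp (s * Lam) := by simpa [hη] using hgrowth s hs0 η
    _ ≤ ε * m * Real.exp (s * (1 - Lam)) * Real.exp (s * Lam) := by gcongr
    _ = ε * (Real.exp s * m) := by rw [mul_assoc, ← Real.exp_add]; ring_nf
    _ ≤ ε * (Real.exp s * R η) := by gcongr; exact hmR η (by simpa using hη)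
    _ ≤ ε * ‖Real.exp s * R η‖ := by gcongr; exact Real.le_norm_self _

theorem isLittleO_nhds_zero (hΦ : IsSubunitFlow Φ lam Lam) (hR : Continuous R) (hR0 : R 0 = 0)
    (hhom : ∀ s ξ, R (Φ s *ᵥ ξ) = Real.exp s * R ξ) :
    R =o[𝓝 0] fun ξ => ‖ξ‖ := by
  rw [isLittleO_iff]
  intro ε hε
  obtain ⟨-, -, hLam⟩ := hΦ.rates
  obtain ⟨c, hc, hgrowth⟩ := hΦ.growth
  obtain ⟨M, hM⟩ := (isCompact_sphere (0 : ι → ℝ) 1).exists_bound_of_continuousOn hR.continuousOn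
  obtain ⟨s₀, hs₀⟩ : ∃ s₀, ∀ s ≤ s₀, M * c * Real.exp (s * (1 - Lam)) ≤ ε ∧ s ≤ 0 := by
    have hlim : Tendsto (fun s => M * c * Real.exp (s * (1 - Lam))) atBot (𝓝 0) := by
      simpa using (Real.tendsto_exp_atBot.comp
        (tendsto_id.atBot_mul_const (sub_pos.2 hLam))).const_mul (M * c)
    exact eventually_atBot.1 ((hlim.eventually (ge_mem_nhds hε)).and (eventually_le_atBot 0))
  obtain ⟨C, hC0, hC⟩ := hΦ.exists_norm_mulVec_le_of_le (-s₀)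
  filter_upwards [ball_mem_nhds (0 : ι → ℝ) (inv_pos.2 hC0)] with ξ hξ
  replace hξ : ‖ξ‖ < C⁻¹ := by simpa using hξ
  rcases eq_or_ne ξ 0 with rfl | hξ0
  · simp [hR0]
  obtain ⟨s, η, hη, rfl⟩ := hΦ.exists_norm_eq_one_mulVec_eq hξ0
  have hs : s ≤ s₀ := by
    by_contra! hs
    have := hC (-s) (by linarith) (Φ s *ᵥ η)
    rw [hΦ.mulVec_neg_mulVec, hη] at this
    have := mul_lt_mul_of_pos_left hξ hC0
    rw [mul_inv_cancel₀ hC0.ne'] at this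
    linarith
  obtain ⟨hMc, hs0⟩ := hs₀ s hs
  have hlow : Real.exp (s * Lam) ≤ c * ‖Φ s *ᵥ η‖ := by
    have h := hgrowth (-s) (by linarith) (Φ s *ᵥ η)
    rw [hΦ.mulVec_neg_mulVec, hη] at h
    calc Real.exp (s * Lam) ≤ Real.exp (s * Lam) * (c * Real.exp (-s * Lam) * ‖Φ s *ᵥ η‖) :=
          le_mul_of_one_le_right (Real.exp_pos _).le h
      _ = c * ‖Φ s *ᵥ η‖ := by rw [neg_mul, Real.exp_neg]; field_simp
  have hM0 : 0 ≤ M := (norm_nonneg _).trans (hM η (by simpa using hη))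
  rw [hhom, norm_norm, norm_mul, Real.norm_of_nonneg (Real.exp_pos s).le]
  calc Real.exp s * ‖R η‖ ≤ Real.exp s * M := by gcongr; exact hM η (by simpa using hη)
    _ = M * Real.exp (s * (1 - Lam)) * Real.exp (s * Lam) := by
        rw [mul_assoc, ← Real.exp_add]; ring_nf
    _ ≤ M * Real.exp (s * (1 - Lam)) * (c * ‖Φ s *ᵥ η‖) := by gcongr
    _ = M * c * Real.exp (s * (1 - Lam)) * ‖Φ s *ᵥ η‖ := by ring
    _ ≤ ε * ‖Φ s *ᵥ η‖ := by gcongr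

end IsSubunitFlow

theorem exp_smul_conj_diagonal {B : Matrix ι ι ℝ} (hB : IsUnit B) (D : ι → ℝ) (s : ℝ) :
    NormedSpace.exp (s • (B * diagonal D * B⁻¹))
      = B * diagonal (fun i => Real.exp (s * D i)) * B⁻¹ := by
  rw [← Matrix.smul_mul, ← Matrix.mul_smul, ← diagonal_smul, exp_conj B _ hB, exp_diagonal,
    Pi.exp_def]
  simp [Real.exp_eq_exp_ℝ]

theorem exists_norm_conj_diagonal_mulVec_le (B : Matrix ι ι ℝ) :
    ∃ C > 0, ∀ g v : ι → ℝ, ‖(B * diagonal g * B⁻¹) *ᵥ v‖ ≤ C * ‖g‖ * ‖v‖ := by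
  let _ := Matrix.linftyOpNormedRing (n := ι) (α := ℝ)
  refine ⟨‖B‖ * ‖B⁻¹‖ + 1, by positivity, fun g v => ?_⟩
  calc ‖(B * diagonal g * B⁻¹) *ᵥ v‖ ≤ ‖B * diagonal g * B⁻¹‖ * ‖v‖ := linfty_opNorm_mulVec _ _
    _ ≤ ‖B‖ * ‖g‖ * ‖B⁻¹‖ * ‖v‖ := by
      gcongr
      refine (linfty_opNorm_mul _ _).trans ?_
      gcongr
      exact (linfty_opNorm_mul _ _).trans (by rw [linfty_opNorm_diagonal])
    _ ≤ (‖B‖ * ‖B⁻¹‖ + 1) * ‖g‖ * ‖v‖ := by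
      rw [mul_right_comm ‖B‖]; gcongr; linarith

theorem isSubunitFlow_exp_smul {B : Matrix ι ι ℝ} (hB : IsUnit B) {D : ι → ℝ} {lam Lam : ℝ}
    (hrates : 0 < lam ∧ 0 < Lam ∧ Lam < 1) (hD : ∀ i, D i ∈ Icc lam Lam) :
    IsSubunitFlow (fun s : ℝ => NormedSpace.exp (s • (B * diagonal D * B⁻¹))) lam Lam where
  map_add s u := by
    rw [add_smul, exp_add_of_commute]
    exact ((Commute.refl _).smul_left s).smul_right u
  map_zero := by simp only [zero_smul, NormedSpace.exp_zero]
  continuous := by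
    simp only [exp_smul_conj_diagonal hB]
    fun_prop
  rates := hrates
  growth := by
    obtain ⟨C, hC, hCb⟩ := exists_norm_conj_diagonal_mulVec_le B
    refine ⟨C, hC, fun s hs v => ?_⟩
    have hexp : ‖fun i => Real.exp (s * D i)‖ ≤ Real.exp (s * Lam) :=
      (pi_norm_le_iff_of_nonneg (Real.exp_pos _).le).2 fun i => by
        rw [Real.norm_of_nonneg (Real.exp_pos _).le]
        gcongr
        exact (hD i).2
    simpa only [exp_smul_conj_diagonal hB] using
      (hCb _ v).trans (by gcongr)
  decay := by
    obtain ⟨C, hC, hCb⟩ := exists_norm_conj_diagonal_mulVec_le B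
    refine ⟨C, hC, fun s hs v => ?_⟩
    have hexp : ‖fun i => Real.exp (s * D i)‖ ≤ Real.exp (s * lam) :=
      (pi_norm_le_iff_of_nonneg (Real.exp_pos _).le).2 fun i => by
        rw [Real.norm_of_nonneg (Real.exp_pos _).le]
        exact Real.exp_le_exp.2 (mul_le_mul_of_nonpos_left (hD i).1 hs)
    simpa only [exp_smul_conj_diagonal hB] using
      (hCb _ v).trans (by gcongr)

theorem exists_isSubunitFlow_exp_smul {B : Matrix ι ι ℝ} (hB : IsUnit B) {D : ι → ℝ}
    (hD : ∀ i, D i ∈ Ioo 0 1) :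
    ∃ lam Lam, IsSubunitFlow (fun s : ℝ => NormedSpace.exp (s • (B * diagonal D * B⁻¹))) lam Lam :=
  let ⟨lam, Lam, hrates, hDI⟩ := exists_mem_Icc_of_mem_Ioo hD
  ⟨lam, Lam, isSubunitFlow_exp_smul hB hrates hDI⟩

theorem exp_smul_one_sub (E : Matrix ι ι ℝ) (a : ℝ) :
    NormedSpace.exp (a • (1 - E)) = Real.exp a • NormedSpace.exp ((-a) • E) := by
  have hcomm : Commute (a • (1 : Matrix ι ι ℝ)) ((-a) • E) :=
    ((Commute.one_left E).smul_left a).smul_right (-a)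
  rw [smul_sub, sub_eq_add_neg, ← neg_smul, exp_add_of_commute _ _ hcomm, smul_one_eq_diagonal,
    exp_diagonal, Pi.exp_def, ← Real.exp_eq_exp_ℝ, ← smul_one_eq_diagonal, smul_one_mul]

end Flow

/-- Properties of the Legendre–Fenchel transform R^# of the positive-definite real part R of
a polynomial, homogeneous w.r.t. a diagonalizable E with eigenvalues in (0,1): R^# is
finite-valued (an honest supremum), continuous, positive-definite, and I - E^* ∈ Exp(R^#). -/
theorem legendre_fenchel_properties {d : ℕ}
    (p : MvPolynomial (Fin d) ℂ) (R : (Fin d → ℝ) → ℝ)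
    (hR : ∀ ξ : Fin d → ℝ, R ξ = (MvPolynomial.eval (fun i => (ξ i : ℂ)) p).re)
    (hnonneg : ∀ ξ, 0 ≤ R ξ) (hdef : ∀ ξ : Fin d → ℝ, R ξ = 0 ↔ ξ = 0)
    (E B : Matrix (Fin d) (Fin d) ℝ) (D : Fin d → ℝ)
    (hB : IsUnit B) (hD : ∀ i, D i ∈ Set.Ioo (0:ℝ) 1)
    (hdiag : E = B * Matrix.diagonal D * B⁻¹)
    (hhom : ∀ t : ℝ, 0 < t → ∀ ξ : Fin d → ℝ,
      R ((NormedSpace.exp ((Real.log t) • E)).mulVec ξ) = t * R ξ) :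
    ∃ Rs : (Fin d → ℝ) → ℝ,
      (∀ x : Fin d → ℝ, IsLUB {y : ℝ | ∃ ξ : Fin d → ℝ, y = ξ ⬝ᵥ x - R ξ} (Rs x)) ∧
      Continuous Rs ∧
      (∀ x, 0 ≤ Rs x) ∧
      (∀ x : Fin d → ℝ, Rs x = 0 ↔ x = 0) ∧
      (∀ t : ℝ, 0 < t → ∀ x : Fin d → ℝ,
        Rs ((NormedSpace.exp ((Real.log t) • ((1 : Matrix (Fin d) (Fin d) ℝ) - E)))ᵀ.mulVec x)
          = t * Rs x) := by
  subst hdiag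
  have hR0 : R 0 = 0 := (hdef 0).2 rfl
  have hRc : Continuous R := by
    rw [funext hR]
    exact Complex.continuous_re.comp ((MvPolynomial.continuous_eval p).comp (by fun_prop))
  obtain ⟨lam, Lam, hΦ⟩ := exists_isSubunitFlow_exp_smul hB hD
  have hhomΦ : ∀ (s : ℝ) ξ, R (NormedSpace.exp (s • (B * diagonal D * B⁻¹)) *ᵥ ξ)
      = Real.exp s * R ξ := fun s ξ => by
    simpa using hhom _ (Real.exp_pos s) ξ
  have hbdd : ∀ x, BddAbove (range fun ξ => ξ ⬝ᵥ x - R ξ) :=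
    bddAbove_range_dotProduct_sub hRc hR0 hnonneg (hΦ.norm_isLittleO_cocompact hRc
      (fun ξ hξ => (hnonneg ξ).lt_of_ne' (mt (hdef ξ).1 hξ)) hhomΦ)
  refine ⟨legendreFenchel R, fun x => isLUB_legendreFenchel (hbdd x),
    continuous_legendreFenchel hbdd, fun x => legendreFenchel_nonneg hR0 (hbdd x),
    fun x => legendreFenchel_eq_zero_iff hR0 hnonneg hbdd (hΦ.isLittleO_nhds_zero hRc hR0 hhomΦ),
    fun t ht x => ?_⟩
  rw [exp_smul_one_sub, Real.exp_log ht]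
  exact legendreFenchel_smul_transpose_mulVec ht.le (hΦ.mul_neg (Real.log t)) (hhom t ht) x
end
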